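/- arXiv:1909.07663 — 7 statements merged into one kernel-verified Lean document; each statement's English description precedes it below -/
import Mathlib

section
/- Let A = (Σ, Q, i, F, δ) be a DFA. Define the DFA Star(A) with state set 2^Q, initial state ∅, final states {E ⊆ Q : E ∩ F ≠ ∅} ∪ {∅}, and transitions: from ∅ on letter a, go to {δ(i,a)} if δ(i,a) ∉ F and to {δ(i,a), i} otherwise; from nonempty E on letter a, go to δ^a(E) if δ^a(E) ∩ F = ∅ and to δ^a(E) ∪ {i} otherwise. Then L(Star(A)) = (L(A))*. -/
open scoped Computability

open scoped Classical in
/-- The subset construction `Star(A)` for the Kleene star of the language of `A`. -/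
noncomputable def StarDFA {α σ : Type} (A : DFA α σ) : DFA α (Set σ) where
  step := fun E a =>
    if E = ∅ then
      (if A.step A.start a ∈ A.accept then {A.step A.start a, A.start}
       else {A.step A.start a})
    else
      (if ((fun q => A.step q a) '' E) ∩ A.accept = ∅ then (fun q => A.step q a) '' E
       else ((fun q => A.step q a) '' E) ∪ {A.start})
  start := ∅
  accept := {E | (E ∩ A.accept).Nonempty} ∪ {∅}

/-!
After a nonempty word `w`, `Star(A)` is in the set of states that `A` reaches on the suffixes `s`
of the factorizations `w = u s` with `u ∈ L(A)*`. Reading a letter `a` maps these states by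
`δ(·, a)`, and the empty suffix contributes `i` exactly when `w a ∈ L(A)*`; since a nonempty word of
`L(A)*` ends with a nonempty factor from `L(A)`, that happens iff some `δ(q, a)` with `q` in the
current set is final. So the set meets `F` iff `w ∈ L(A)*`; the state `∅` stands for the empty word.
-/

namespace Language

variable {α : Type*} {l : Language α}

theorem append_mem_kstar {u s : List α} (hu : u ∈ l∗) (hs : s ∈ l) : u ++ s ∈ l∗ :=
  (kstar_mul_le_kstar : l∗ * l ≤ l∗) (append_mem_mul hu hs)

theorem exists_append_of_mem_kstar {w : List α} (hw : w ∈ l∗) (hne : w ≠ []) :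
    ∃ u s, w = u ++ s ∧ u ∈ l∗ ∧ s ∈ l ∧ s ≠ [] := by
  obtain ⟨L, rfl, hL⟩ := mem_kstar_iff_exists_nonempty.mp hw
  obtain ⟨L, s, rfl⟩ := L.eq_nil_or_concat'.resolve_left (by rintro rfl; exact hne rfl)
  simp only [List.mem_append, List.mem_singleton] at hL
  exact ⟨L.flatten, s, by simp, join_mem_kstar fun y hy => (hL y (.inl hy)).1,
    (hL s (.inr rfl)).1, (hL s (.inr rfl)).2⟩

theorem append_singleton_mem_kstar_iff {w : List α} {a : α} :
    w ++ [a] ∈ l∗ ↔ ∃ u t, w = u ++ t ∧ u ∈ l∗ ∧ t ++ [a] ∈ l := by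
  constructor
  · intro hw
    obtain ⟨u, s, hws, hu, hs, hne⟩ := exists_append_of_mem_kstar hw (by simp)
    obtain ⟨t, b, rfl⟩ := s.eq_nil_or_concat'.resolve_left hne
    rw [← List.append_assoc] at hws
    obtain ⟨rfl, rfl⟩ := List.append_singleton_inj.mp hws
    exact ⟨u, t, rfl, hu, hs⟩
  · rintro ⟨u, t, rfl, hu, ht⟩
    rw [List.append_assoc]
    exact append_mem_kstar hu ht

end Language

namespace DFA

variable {α σ : Type} (A : DFA α σ)

def starStates (w : List α) : Set σ :=
  {q | ∃ u s, w = u ++ s ∧ u ∈ A.accepts∗ ∧ A.eval s = q}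

theorem eval_mem_starStates (w : List α) : A.eval w ∈ A.starStates w :=
  ⟨[], w, rfl, Language.nil_mem_kstar _, rfl⟩

theorem starStates_nonempty (w : List α) : (A.starStates w).Nonempty :=
  ⟨_, A.eval_mem_starStates w⟩

theorem starStates_nil : A.starStates [] = {A.start} := by
  ext q
  simp [starStates, eq_comm, Language.nil_mem_kstar]

theorem starStates_append_singleton (w : List α) (a : α) :
    A.starStates (w ++ [a]) =
      (A.step · a) '' A.starStates w ∪ {q | w ++ [a] ∈ A.accepts∗ ∧ q = A.start} := by
  ext q
  constructor
  · rintro ⟨u, s, hws, hu, rfl⟩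
    rcases s.eq_nil_or_concat' with rfl | ⟨t, b, rfl⟩
    · rw [List.append_nil] at hws
      exact .inr ⟨hws ▸ hu, rfl⟩
    · rw [← List.append_assoc] at hws
      obtain ⟨rfl, rfl⟩ := List.append_singleton_inj.mp hws
      exact .inl ⟨A.eval t, ⟨u, t, rfl, hu, rfl⟩, (A.eval_append_singleton t a).symm⟩
  · rintro (⟨_, ⟨u, t, rfl, hu, rfl⟩, rfl⟩ | ⟨hw, rfl⟩)
    · exact ⟨u, t ++ [a], by simp, hu, A.eval_append_singleton t a⟩
    · exact ⟨w ++ [a], [], by simp, hw, rfl⟩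

theorem append_singleton_mem_kstar_accepts_iff (w : List α) (a : α) :
    w ++ [a] ∈ A.accepts∗ ↔ ((A.step · a) '' A.starStates w ∩ A.accept).Nonempty := by
  simp only [Language.append_singleton_mem_kstar_iff, mem_accepts, eval_append_singleton,
    starStates, Set.Nonempty, Set.mem_inter_iff, Set.mem_image, Set.mem_ofPred_eq]
  constructor
  · rintro ⟨u, t, hwt, hu, ht⟩
    exact ⟨_, ⟨_, ⟨u, t, hwt, hu, rfl⟩, rfl⟩, ht⟩
  · rintro ⟨_, ⟨_, ⟨u, t, hwt, hu, rfl⟩, rfl⟩, ht⟩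
    exact ⟨u, t, hwt, hu, ht⟩

theorem mem_kstar_accepts_iff {w : List α} (hw : w ≠ []) :
    w ∈ A.accepts∗ ↔ (A.starStates w ∩ A.accept).Nonempty := by
  constructor
  · intro hstar
    obtain ⟨u, s, hws, hu, hs, -⟩ := Language.exists_append_of_mem_kstar hstar hw
    exact ⟨A.eval s, ⟨u, s, hws, hu, rfl⟩, hs⟩
  · rintro ⟨_, ⟨u, s, rfl, hu, rfl⟩, hs⟩
    exact Language.append_mem_kstar hu hs

end DFA

namespace StarDFA

variable {α σ : Type} (A : DFA α σ)

theorem step_empty (a : α) : (StarDFA A).step ∅ a = (StarDFA A).step {A.start} a := by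
  by_cases h : A.step A.start a ∈ A.accept <;> simp [StarDFA, h, Set.pair_comm]

theorem step_starStates (w : List α) (a : α) :
    (StarDFA A).step (A.starStates w) a = A.starStates (w ++ [a]) := by
  rw [A.starStates_append_singleton]
  simp only [StarDFA, if_neg (A.starStates_nonempty w).ne_empty]
  split_ifs with h
  · have : w ++ [a] ∉ A.accepts∗ := by
      rw [A.append_singleton_mem_kstar_accepts_iff, h]
      exact Set.not_nonempty_empty
    simp [this]
  · have : w ++ [a] ∈ A.accepts∗ := by
      rw [A.append_singleton_mem_kstar_accepts_iff]
      exact Set.nonempty_iff_ne_empty.mpr h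
    simp [this]

theorem eval_eq_starStates {w : List α} (hw : w ≠ []) : (StarDFA A).eval w = A.starStates w := by
  induction w using List.reverseRecOn with
  | nil => exact absurd rfl hw
  | append_singleton v a ih =>
    rw [DFA.eval_append_singleton, ← step_starStates]
    rcases eq_or_ne v [] with rfl | hv
    · rw [DFA.eval_nil, DFA.starStates_nil]
      exact step_empty A a
    · rw [ih hv]

end StarDFA

/-- The star construction is correct: `L(Star(A)) = (L(A))*`. -/
theorem starDFA_accepts {α σ : Type} (A : DFA α σ) :
    (StarDFA A).accepts = (KStar.kstar A.accepts : Language α) := by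
  ext w
  rcases eq_or_ne w [] with rfl | hw
  · exact iff_of_true (Or.inr rfl) (Language.nil_mem_kstar _)
  · rw [A.mem_kstar_accepts_iff hw, DFA.mem_accepts, StarDFA.eval_eq_starStates A hw]
    exact or_iff_left (A.starStates_nonempty w).ne_empty
end

section
/- A tableau T ⊆ [n₁] × [n₂] (viewed as a boolean matrix) is right-triangle free — meaning there are no x ≠ x' and y ≠ y' with exactly three of the four positions (x,y), (x,y'), (x',y), (x',y') in T — if and only if for all rows i, i' ∈ [n₁], the rows i and i' of T are either equal (T contains (i,j) iff it contains (i',j), for all j) or disjoint (for no j are both (i,j) and (i',j) in T). -/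
/-- A tableau `T ⊆ [n₁] × [n₂]` is right-triangle free: there are no `x ≠ x'`,
`y ≠ y'` such that exactly three of the four positions `(x,y), (x,y'), (x',y), (x',y')`
belong to `T`. -/
def RTFree {n₁ n₂ : ℕ} (T : Set (Fin n₁ × Fin n₂)) : Prop :=
  ¬ ∃ (x x' : Fin n₁) (y y' : Fin n₂), x ≠ x' ∧ y ≠ y' ∧
      (x, y) ∈ T ∧ (x, y') ∈ T ∧ (x', y) ∈ T ∧ (x', y') ∉ T

namespace RTFree

variable {n₁ n₂ : ℕ} {T : Set (Fin n₁ × Fin n₂)}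

theorem mem_of_mem_of_common_column (hT : RTFree T) {x x' : Fin n₁} {j₀ j : Fin n₂}
    (h₀ : (x, j₀) ∈ T) (h₀' : (x', j₀) ∈ T) (hj : (x, j) ∈ T) : (x', j) ∈ T := by
  obtain rfl | hx := eq_or_ne x x'
  · exact hj
  by_contra hj'
  have hj₀ : j₀ ≠ j := by
    rintro rfl
    exact hj' h₀'
  exact hT ⟨x, x', j₀, j, hx, hj₀, h₀, hj, h₀', hj'⟩

theorem rows_eq_or_disjoint (hT : RTFree T) (i i' : Fin n₁) :
    (∀ j : Fin n₂, (i, j) ∈ T ↔ (i', j) ∈ T) ∨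
      (∀ j : Fin n₂, ¬((i, j) ∈ T ∧ (i', j) ∈ T)) := by
  by_cases hdisj : ∀ j : Fin n₂, ¬((i, j) ∈ T ∧ (i', j) ∈ T)
  · exact Or.inr hdisj
  push Not at hdisj
  obtain ⟨j₀, h₀, h₀'⟩ := hdisj
  exact Or.inl fun j =>
    ⟨hT.mem_of_mem_of_common_column h₀ h₀', hT.mem_of_mem_of_common_column h₀' h₀⟩

theorem of_rows_eq_or_disjoint
    (h : ∀ i i' : Fin n₁, (∀ j : Fin n₂, (i, j) ∈ T ↔ (i', j) ∈ T) ∨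
      (∀ j : Fin n₂, ¬((i, j) ∈ T ∧ (i', j) ∈ T))) :
    RTFree T := by
  rintro ⟨x, x', y, y', -, -, hxy, hxy', hx'y, hx'y'⟩
  rcases h x x' with heq | hdisj
  · exact hx'y' ((heq y').mp hxy')
  · exact hdisj y ⟨hxy, hx'y⟩

end RTFree

/-- A tableau is right-triangle free iff any two of its rows are equal or disjoint. -/
theorem rtfree_iff_rows_equal_or_disjoint {n₁ n₂ : ℕ} (T : Set (Fin n₁ × Fin n₂)) :
    RTFree T ↔ ∀ i i' : Fin n₁,
      (∀ j : Fin n₂, (i, j) ∈ T ↔ (i', j) ∈ T) ∨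
        (∀ j : Fin n₂, ¬((i, j) ∈ T ∧ (i', j) ∈ T)) :=
  ⟨RTFree.rows_eq_or_disjoint, RTFree.of_rows_eq_or_disjoint⟩
end

section
/- For every tableau T ⊆ [n₁] × [n₂] there exists a unique smallest (with respect to inclusion) right-triangle-free tableau Sat(T) containing T. -/
theorem isLeast_sInf_of_sInf_closed {α : Type*} [CompleteLattice α] {p : α → Prop}
    (hp : ∀ s : Set α, (∀ a ∈ s, p a) → p (sInf s)) (x : α) :
    IsLeast {a | p a ∧ x ≤ a} (sInf {a | p a ∧ x ≤ a}) :=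
  ⟨⟨hp _ fun _ ha => ha.1, le_sInf fun _ ha => ha.2⟩, fun _ ha => sInf_le ha⟩

theorem RTFree.sInter {n₁ n₂ : ℕ} {𝒮 : Set (Set (Fin n₁ × Fin n₂))}
    (h𝒮 : ∀ S ∈ 𝒮, RTFree S) : RTFree (⋂₀ 𝒮) := by
  rintro ⟨x, x', y, y', hx, hy, hxy, hxy', hx'y, hx'y'⟩
  obtain ⟨S, hS, hx'y'S⟩ : ∃ S ∈ 𝒮, (x', y') ∉ S := by
    simpa only [Set.mem_sInter, not_forall, exists_prop] using hx'y'
  exact h𝒮 S hS ⟨x, x', y, y', hx, hy, hxy S hS, hxy' S hS, hx'y S hS, hx'y'S⟩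

/-- Every tableau has a unique smallest right-triangle-free tableau containing it. -/
theorem sat_exists_unique {n₁ n₂ : ℕ} (T : Set (Fin n₁ × Fin n₂)) :
    ∃! S : Set (Fin n₁ × Fin n₂),
      RTFree S ∧ T ⊆ S ∧ ∀ S' : Set (Fin n₁ × Fin n₂), RTFree S' → T ⊆ S' → S ⊆ S' := by
  have hSat := isLeast_sInf_of_sInf_closed (fun _ => RTFree.sInter) T
  refine ⟨_, ⟨hSat.1.1, hSat.1.2, fun S' hS' hTS' => hSat.2 ⟨hS', hTS'⟩⟩, ?_⟩
  rintro S ⟨hS, hTS, hleast⟩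
  exact (hSat.unique ⟨⟨hS, hTS⟩, fun S' hS' => hleast S' hS'.1 hS'.2⟩).symm
end

section
/- Define a relation → on tableaux over [n₁] × [n₂] by T → T' iff T' = T ∪ {(i',j')} with (i',j') ∉ T and there exists (i,j) with i ≠ i', j ≠ j', and {(i,j), (i',j), (i,j')} ⊆ T. Let ↔* be the symmetric-reflexive-transitive closure of →. Then two tableaux T, T' satisfy T ↔* T' if and only if Sat(T) = Sat(T'), where Sat(T) is the smallest right-triangle-free tableau containing T. -/
/-- The right-triangle completion step: `T → T'` iff `T' = T ∪ {(i',j')}` with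
`(i',j') ∉ T` and `{(i,j), (i',j), (i,j')} ⊆ T` for some `i ≠ i'`, `j ≠ j'`. -/
def TStep {n₁ n₂ : ℕ} (T T' : Set (Fin n₁ × Fin n₂)) : Prop :=
  ∃ (i i' : Fin n₁) (j j' : Fin n₂), i ≠ i' ∧ j ≠ j' ∧ (i', j') ∉ T ∧
    (i, j) ∈ T ∧ (i', j) ∈ T ∧ (i, j') ∈ T ∧ T' = T ∪ {(i', j')}

variable {n₁ n₂ : ℕ}

def rtFreeSupersets (T : Set (Fin n₁ × Fin n₂)) : Set (Set (Fin n₁ × Fin n₂)) :=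
  {U | RTFree U ∧ T ⊆ U}

lemma isLeast_rtFreeSupersets_self {T : Set (Fin n₁ × Fin n₂)} (hT : RTFree T) :
    IsLeast (rtFreeSupersets T) T :=
  ⟨⟨hT, subset_rfl⟩, fun _ hU => hU.2⟩

lemma TStep.rtFreeSupersets_eq {A B : Set (Fin n₁ × Fin n₂)} (h : TStep A B) :
    rtFreeSupersets A = rtFreeSupersets B := by
  obtain ⟨i, i', j, j', hi, hj, -, hij, hi'j, hij', rfl⟩ := h
  ext U
  refine and_congr_right fun hU => ⟨fun hAU => ?_, fun hBU => Set.subset_union_left.trans hBU⟩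
  have hcorner : (i', j') ∈ U := by
    by_contra hc
    exact hU ⟨i, i', j, j', hi, hj, hAU hij, hAU hij', hAU hi'j, hc⟩
  exact Set.union_subset hAU (Set.singleton_subset_iff.mpr hcorner)

lemma Relation.EqvGen.rtFreeSupersets_eq {A B : Set (Fin n₁ × Fin n₂)}
    (h : Relation.EqvGen TStep A B) : rtFreeSupersets A = rtFreeSupersets B := by
  induction h with
  | rel _ _ hstep => exact hstep.rtFreeSupersets_eq
  | refl => rfl
  | symm _ _ _ ih => exact ih.symm
  | trans _ _ _ _ _ ih₁ ih₂ => exact ih₁.trans ih₂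

lemma exists_tstep_ssuperset_of_not_rtFree {T : Set (Fin n₁ × Fin n₂)} (hT : ¬ RTFree T) :
    ∃ T', TStep T T' ∧ T ⊂ T' := by
  obtain ⟨x, x', y, y', hx, hy, hxy, hxy', hx'y, hx'y'⟩ := not_not.mp hT
  refine ⟨T ∪ {(x', y')}, ⟨x, x', y, y', hx, hy, hx'y', hxy, hx'y, hxy', rfl⟩, ?_⟩
  rw [Set.union_singleton]
  exact Set.ssubset_insert hx'y'

lemma exists_reflTransGen_tstep_rtFree (T : Set (Fin n₁ × Fin n₂)) :
    ∃ M, Relation.ReflTransGen TStep T M ∧ RTFree M := by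
  induction T using WellFoundedGT.induction with
  | _ T ih =>
    by_cases hT : RTFree T
    · exact ⟨T, .refl, hT⟩
    · obtain ⟨T', hstep, hlt⟩ := exists_tstep_ssuperset_of_not_rtFree hT
      obtain ⟨M, hT'M, hM⟩ := ih T' hlt
      exact ⟨M, .head hstep hT'M, hM⟩

lemma reflTransGen_tstep_of_isLeast {T S : Set (Fin n₁ × Fin n₂)}
    (hS : IsLeast (rtFreeSupersets T) S) : Relation.ReflTransGen TStep T S := by
  obtain ⟨M, hTM, hM⟩ := exists_reflTransGen_tstep_rtFree T
  have hsame := (Relation.EqvGen.reflTransGen_le_eqvGen _ _ _ hTM).rtFreeSupersets_eq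
  rwa [hS.unique (hsame ▸ isLeast_rtFreeSupersets_self hM)]

/-- Two tableaux are related by the symmetric-reflexive-transitive closure of `→`
iff they have the same saturation (smallest right-triangle-free superset). -/
theorem eqvGen_tstep_iff_sat_eq {n₁ n₂ : ℕ} (T T' S S' : Set (Fin n₁ × Fin n₂))
    (hS : RTFree S ∧ T ⊆ S ∧ ∀ U, RTFree U → T ⊆ U → S ⊆ U)
    (hS' : RTFree S' ∧ T' ⊆ S' ∧ ∀ U, RTFree U → T' ⊆ U → S' ⊆ U) :
    Relation.EqvGen TStep T T' ↔ S = S' := by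
  have hSat : IsLeast (rtFreeSupersets T) S := ⟨⟨hS.1, hS.2.1⟩, fun U hU => hS.2.2 U hU.1 hU.2⟩
  have hSat' : IsLeast (rtFreeSupersets T') S' :=
    ⟨⟨hS'.1, hS'.2.1⟩, fun U hU => hS'.2.2 U hU.1 hU.2⟩
  constructor
  · intro h
    exact hSat.unique (h.rtFreeSupersets_eq ▸ hSat')
  · rintro rfl
    have hTS := Relation.EqvGen.reflTransGen_le_eqvGen _ _ _ (reflTransGen_tstep_of_isLeast hSat)
    have hT'S := Relation.EqvGen.reflTransGen_le_eqvGen _ _ _ (reflTransGen_tstep_of_isLeast hSat')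
    exact hTS.trans _ _ _ (hT'S.symm _ _)
end

section
/- Let F₁ ⊆ [n₁], F₂ ⊆ [n₂], and define the final zone Z = (F₁ × [n₂]) ⊕ ([n₁] × F₂) (symmetric difference). If tableaux T, T' ⊆ [n₁] × [n₂] satisfy T → T' (i.e., T' = T ∪ {(i',j')} where there exists (i,j) with {(i,j),(i',j),(i,j')} ⊆ T, i ≠ i', j ≠ j'), then T ∩ Z ≠ ∅ if and only if T' ∩ Z ≠ ∅. -/
namespace Set

variable {α β : Type*}

theorem mem_symmDiff_prod_univ_univ_prod {s : Set α} {t : Set β} {p : α × β} :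
    p ∈ symmDiff (s ×ˢ univ) (univ ×ˢ t) ↔ Xor (p.1 ∈ s) (p.2 ∈ t) := by
  simp only [mem_symmDiff, mem_prod, mem_univ, and_true, true_and, xor_def]

theorem inter_symmDiff_prod_univ_univ_prod_nonempty_of_corner {s : Set α} {t : Set β}
    {T : Set (α × β)} {a a' : α} {b b' : β} (hab : (a, b) ∈ T) (ha'b : (a', b) ∈ T)
    (hab' : (a, b') ∈ T) (h : (a', b') ∈ symmDiff (s ×ˢ univ) (univ ×ˢ t)) :
    (T ∩ symmDiff (s ×ˢ univ) (univ ×ˢ t)).Nonempty := by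
  have hcorner : (a, b) ∈ symmDiff (s ×ˢ univ) (univ ×ˢ t) ∨
      (a', b) ∈ symmDiff (s ×ˢ univ) (univ ×ˢ t) ∨
      (a, b') ∈ symmDiff (s ×ˢ univ) (univ ×ˢ t) := by
    simp only [mem_symmDiff_prod_univ_univ_prod, xor_def] at h ⊢
    tauto
  rcases hcorner with h | h | h
  exacts [⟨_, hab, h⟩, ⟨_, ha'b, h⟩, ⟨_, hab', h⟩]

theorem union_singleton_inter_nonempty_iff {s t : Set α} {x : α}
    (h : x ∈ t → (s ∩ t).Nonempty) : ((s ∪ {x}) ∩ t).Nonempty ↔ (s ∩ t).Nonempty := by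
  rw [union_inter_distrib_right, union_nonempty, singleton_inter_nonempty]
  exact or_iff_left_of_imp h

end Set

/-- The triangle-completion step preserves finality: with final zone
`Z = (F₁ × [n₂]) ⊕ ([n₁] × F₂)`, if `T → T'` then `T` meets `Z` iff `T'` meets `Z`. -/
theorem tstep_preserves_final {n₁ n₂ : ℕ}
    (F₁ : Set (Fin n₁)) (F₂ : Set (Fin n₂)) (T T' : Set (Fin n₁ × Fin n₂))
    (h : TStep T T') :
    (T ∩ symmDiff (F₁ ×ˢ (Set.univ : Set (Fin n₂)))
        ((Set.univ : Set (Fin n₁)) ×ˢ F₂)).Nonempty ↔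
      (T' ∩ symmDiff (F₁ ×ˢ (Set.univ : Set (Fin n₂)))
        ((Set.univ : Set (Fin n₁)) ×ˢ F₂)).Nonempty := by
  obtain ⟨i, i', j, j', -, -, -, hij, hi'j, hij', rfl⟩ := h
  exact (Set.union_singleton_inter_nonempty_iff
    (Set.inter_symmDiff_prod_univ_univ_prod_nonempty_of_corner hij hi'j hij')).symm
end

section
/- Let T, T' ⊆ [n₁] × [n₂] be tableaux with T → T', and let (f,g) be a pair of functions f : [n₁] → [n₁], g : [n₂] → [n₂]. Let (f,g)(T) = {(f(x), g(y)) : (x,y) ∈ T}. Then either (f,g)(T) → (f,g)(T') or (f,g)(T) = (f,g)(T'). -/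
/-- `i ≠ i'` and `j ≠ j'` come for free, since `(i, j')` and `(i', j)` lie in `T` and `(i', j')` does not. -/
theorem TStep.of_triangle {n₁ n₂ : ℕ} {T : Set (Fin n₁ × Fin n₂)} {i i' : Fin n₁}
    {j j' : Fin n₂} (hij : (i, j) ∈ T) (hi'j : (i', j) ∈ T) (hij' : (i, j') ∈ T)
    (hcorner : (i', j') ∉ T) : TStep T (T ∪ {(i', j')}) :=
  ⟨i, i', j, j', fun he => hcorner (he ▸ hij'), fun he => hcorner (he ▸ hi'j), hcorner,
    hij, hi'j, hij', rfl⟩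

/-- If `T → T'` and `(f,g)` is a pair of self-maps, then the images
`(f,g)(T)` and `(f,g)(T')` satisfy `(f,g)(T) → (f,g)(T')` or are equal. -/
theorem tstep_image {n₁ n₂ : ℕ} (T T' : Set (Fin n₁ × Fin n₂))
    (f : Fin n₁ → Fin n₁) (g : Fin n₂ → Fin n₂) (h : TStep T T') :
    TStep (Prod.map f g '' T) (Prod.map f g '' T') ∨
      Prod.map f g '' T = Prod.map f g '' T' := by
  obtain ⟨i, i', j, j', -, -, -, hij, hi'j, hij', rfl⟩ := h
  rw [Set.image_union, Set.image_singleton, Prod.map_apply]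
  by_cases hcorner : (f i', g j') ∈ Prod.map f g '' T
  · exact Or.inr (Set.union_singleton.trans (Set.insert_eq_of_mem hcorner)).symm
  · exact Or.inl (TStep.of_triangle (Set.mem_image_of_mem _ hij) (Set.mem_image_of_mem _ hi'j)
      (Set.mem_image_of_mem _ hij') hcorner)
end

section
/- In the DFA StX(Mon(n₁,n₂; F₁,F₂)) for any F₁ ⊆ [n₁], F₂ ⊆ [n₂], if two states (tableaux) T and T' satisfy T ↔* T' (the closure of the triangle-completion relation →), then T and T' are Nerode-equivalent, i.e., not distinguishable by any word. -/
/-! Membership in `Z = (F₁ × [n₂]) ⊕ ([n₁] × F₂)` is the parity `[i ∈ F₁] + [j ∈ F₂]`, and the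
four corners of a rectangle have even total parity; so a completed corner lies in `Z` only if
one of the three corners of its triangle does, and a triangle completion never changes whether a
tableau meets `Z`. A letter maps a completion either to a completion or (when the new corner
collapses onto the image of an old cell) to an equality, and adding `(0, 0)` preserves this too.
Hence `T` and `T'` stay related by `TStep` or equality along every word, and are accepted
together. -/

open scoped Classical in
/-- The DFA `StX(Mon(n₁,n₂;F₁,F₂))`, determined by its final zone `Z`. -/
noncomputable def StX (n₁ n₂ : ℕ) [NeZero n₁] [NeZero n₂]
    (Z : Set (Fin n₁ × Fin n₂)) :
    DFA ((Fin n₁ → Fin n₁) × (Fin n₂ → Fin n₂)) (Set (Fin n₁ × Fin n₂)) where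
  step := fun E a =>
    let E' : Set (Fin n₁ × Fin n₂) :=
      if E = ∅ then {(a.1 0, a.2 0)} else Prod.map a.1 a.2 '' E
    if (E' ∩ Z).Nonempty then E' ∪ {(0, 0)} else E'
  start := ∅
  accept := {E | (E ∩ Z).Nonempty} ∪ {∅}

open Relation

variable {n₁ n₂ : ℕ}

def TriangleDetects (Z : Set (Fin n₁ × Fin n₂)) : Prop :=
  ∀ (i i' : Fin n₁) (j j' : Fin n₂),
    (i', j') ∈ Z → (i, j) ∈ Z ∨ (i', j) ∈ Z ∨ (i, j') ∈ Z

lemma triangleDetects_symmDiff_prod (F₁ : Set (Fin n₁)) (F₂ : Set (Fin n₂)) :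
    TriangleDetects (symmDiff (F₁ ×ˢ (Set.univ : Set (Fin n₂)))
      ((Set.univ : Set (Fin n₁)) ×ˢ F₂)) := by
  intro i i' j j'
  simp only [Set.mem_symmDiff, Set.mem_prod, Set.mem_univ, and_true, true_and]
  tauto

namespace TStep

variable {T T' : Set (Fin n₁ × Fin n₂)}

lemma nonempty_left (h : TStep T T') : T.Nonempty := by
  obtain ⟨i, -, j, -, -, -, -, hij, -⟩ := h
  exact ⟨(i, j), hij⟩

lemma nonempty_right (h : TStep T T') : T'.Nonempty := by
  obtain ⟨-, -, -, -, -, -, -, -, -, -, rfl⟩ := h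
  exact Set.union_nonempty.2 (Or.inr (Set.singleton_nonempty _))

lemma inter_nonempty_iff {Z : Set (Fin n₁ × Fin n₂)} (hZ : TriangleDetects Z)
    (h : TStep T T') : (T' ∩ Z).Nonempty ↔ (T ∩ Z).Nonempty := by
  obtain ⟨i, i', j, j', -, -, -, hij, hi'j, hij', rfl⟩ := h
  refine ⟨?_, fun hT => hT.mono (Set.inter_subset_inter_left _ Set.subset_union_left)⟩
  rintro ⟨p, hp | rfl, hpZ⟩
  · exact ⟨p, hp, hpZ⟩
  · rcases hZ i i' j j' hpZ with hZ | hZ | hZ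
    exacts [⟨_, hij, hZ⟩, ⟨_, hi'j, hZ⟩, ⟨_, hij', hZ⟩]

lemma reflGen_union (S : Set (Fin n₁ × Fin n₂)) (h : TStep T T') :
    ReflGen TStep (T ∪ S) (T' ∪ S) := by
  obtain ⟨i, i', j, j', hi, hj, hnew, hij, hi'j, hij', rfl⟩ := h
  rw [Set.union_right_comm]
  by_cases hS : (i', j') ∈ S
  · rw [Set.union_eq_self_of_subset_right
      (Set.singleton_subset_iff.2 (Set.mem_union_right T hS))]
  · exact .single ⟨i, i', j, j', hi, hj, fun h => h.elim hnew hS, .inl hij, .inl hi'j,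
      .inl hij', rfl⟩

lemma reflGen_image {m₁ m₂ : ℕ} (f : Fin n₁ → Fin m₁) (g : Fin n₂ → Fin m₂) (h : TStep T T') :
    ReflGen TStep (Prod.map f g '' T) (Prod.map f g '' T') := by
  obtain ⟨i, i', j, j', -, -, -, hij, hi'j, hij', rfl⟩ := h
  rw [Set.image_union, Set.image_singleton, Prod.map_apply]
  by_cases hnew : (f i', g j') ∈ Prod.map f g '' T
  · rw [Set.union_eq_self_of_subset_right (Set.singleton_subset_iff.2 hnew)]
  have hf : f i ≠ f i' := fun he => hnew ⟨(i, j'), hij', by simp [he]⟩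
  have hg : g j ≠ g j' := fun he => hnew ⟨(i', j), hi'j, by simp [he]⟩
  exact .single ⟨f i, f i', g j, g j', hf, hg, hnew, ⟨_, hij, rfl⟩, ⟨_, hi'j, rfl⟩,
    ⟨_, hij', rfl⟩, rfl⟩

end TStep

namespace Relation.ReflGen

variable {T T' : Set (Fin n₁ × Fin n₂)}

lemma tStep_inter_nonempty_iff {Z : Set (Fin n₁ × Fin n₂)} (hZ : TriangleDetects Z)
    (h : ReflGen TStep T T') : (T' ∩ Z).Nonempty ↔ (T ∩ Z).Nonempty := by
  rcases h with _ | h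
  exacts [Iff.rfl, h.inter_nonempty_iff hZ]

lemma tStep_union (S : Set (Fin n₁ × Fin n₂)) (h : ReflGen TStep T T') :
    ReflGen TStep (T ∪ S) (T' ∪ S) := by
  rcases h with _ | h
  exacts [.refl, h.reflGen_union S]

end Relation.ReflGen

namespace StX

variable [NeZero n₁] [NeZero n₂] {Z : Set (Fin n₁ × Fin n₂)} {T T' : Set (Fin n₁ × Fin n₂)}

lemma mem_accept_iff_of_reflGen (hZ : TriangleDetects Z) (h : ReflGen TStep T T') :
    T ∈ (StX n₁ n₂ Z).accept ↔ T' ∈ (StX n₁ n₂ Z).accept := by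
  rcases h with _ | h
  · rfl
  simp only [StX, Set.mem_union, Set.mem_ofPred_eq, Set.mem_singleton_iff,
    h.nonempty_left.ne_empty, h.nonempty_right.ne_empty, or_false, h.inter_nonempty_iff hZ]

lemma reflGen_step (hZ : TriangleDetects Z) (h : ReflGen TStep T T')
    (a : (Fin n₁ → Fin n₁) × (Fin n₂ → Fin n₂)) :
    ReflGen TStep ((StX n₁ n₂ Z).step T a) ((StX n₁ n₂ Z).step T' a) := by
  rcases h with _ | h
  · exact .refl
  have himage := h.reflGen_image a.1 a.2
  dsimp only [StX]
  rw [if_neg h.nonempty_left.ne_empty, if_neg h.nonempty_right.ne_empty,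
    himage.tStep_inter_nonempty_iff hZ]
  split_ifs
  exacts [himage.tStep_union _, himage]

lemma reflGen_evalFrom (hZ : TriangleDetects Z) (h : ReflGen TStep T T')
    (w : List ((Fin n₁ → Fin n₁) × (Fin n₂ → Fin n₂))) :
    ReflGen TStep ((StX n₁ n₂ Z).evalFrom T w) ((StX n₁ n₂ Z).evalFrom T' w) := by
  induction w generalizing T T' with
  | nil => exact h
  | cons a w ih => exact ih (reflGen_step hZ h a)

end StX

/-- In `StX(Mon(n₁,n₂;F₁,F₂))`, states related by the closure of the
triangle-completion relation are Nerode-equivalent. -/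
theorem eqvGen_tstep_nerode (n₁ n₂ : ℕ) [NeZero n₁] [NeZero n₂]
    (F₁ : Set (Fin n₁)) (F₂ : Set (Fin n₂))
    (T T' : Set (Fin n₁ × Fin n₂)) (h : Relation.EqvGen TStep T T') :
    ∀ w : List ((Fin n₁ → Fin n₁) × (Fin n₂ → Fin n₂)),
      ((StX n₁ n₂ (symmDiff (F₁ ×ˢ (Set.univ : Set (Fin n₂)))
          ((Set.univ : Set (Fin n₁)) ×ˢ F₂))).evalFrom T w ∈
        (StX n₁ n₂ (symmDiff (F₁ ×ˢ (Set.univ : Set (Fin n₂)))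
          ((Set.univ : Set (Fin n₁)) ×ˢ F₂))).accept) ↔
      ((StX n₁ n₂ (symmDiff (F₁ ×ˢ (Set.univ : Set (Fin n₂)))
          ((Set.univ : Set (Fin n₁)) ×ˢ F₂))).evalFrom T' w ∈
        (StX n₁ n₂ (symmDiff (F₁ ×ˢ (Set.univ : Set (Fin n₂)))
          ((Set.univ : Set (Fin n₁)) ×ˢ F₂))).accept) := by
  have hZ := triangleDetects_symmDiff_prod F₁ F₂
  induction h with
  | rel _ _ hstep =>
    exact fun w => StX.mem_accept_iff_of_reflGen hZ (StX.reflGen_evalFrom hZ (.single hstep) w)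
  | refl => exact fun _ => Iff.rfl
  | symm _ _ _ ih => exact fun w => (ih w).symm
  | trans _ _ _ _ _ ih₁ ih₂ => exact fun w => (ih₁ w).trans (ih₂ w)
end
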